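/- arXiv:2209.06745 — 5 statements merged into one kernel-verified Lean document; each statement's English description precedes it below -/
import Mathlib

section
/- Let S be a set of positive integers, and let z, q ∈ ℂ satisfy |q| < 1/(1 + |z|). Then the family (z^{ℓ(c)} q^{|c|}) indexed by compositions c ∈ C_S is summable, the number 1 − z·∑_{n∈S} q^n is nonzero, and ∑_{c∈C_S} z^{ℓ(c)} q^{|c|} = 1/(1 − z·∑_{n∈S} q^n). -/
/-! Compositions `c` with parts in `S` are lists over `S`, and the weight `z ^ ℓ(c) * q ^ |c|` is
the product of the weights `z * q ^ n` of the parts. The lists of length `k`, i.e. tuples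
`Fin k → S`, contribute `(z ∑_{n ∈ S} q ^ n) ^ k`, so the whole sum is a geometric series.
Absolute convergence holds because `∑_{n ∈ S} ‖z‖ ‖q‖ ^ n ≤ ‖z‖ ‖q‖ / (1 - ‖q‖)` as `0 ∉ S`,
and this is `< 1` exactly when `‖q‖ (1 + ‖z‖) < 1`. -/

section TupleProducts

variable {α 𝕜 : Type*} [NormedField 𝕜] {g : α → 𝕜}

lemma Fin.prod_consEquiv_apply {M : Type*} [CommMonoid M] (g : α → M) {n : ℕ}
    (p : α × (Fin n → α)) :
    ∏ i, g (Fin.consEquiv (fun _ => α) p i) = g p.1 * ∏ i, g (p.2 i) := by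
  simp [Fin.consEquiv, Fin.prod_univ_succ]

lemma summable_norm_prod_tuple (hg : Summable (‖g ·‖)) (n : ℕ) :
    Summable fun v : Fin n → α => ‖∏ i, g (v i)‖ := by
  induction n with
  | zero => exact Summable.of_finite
  | succ n ih =>
    rw [← (Fin.consEquiv fun _ => α).summable_iff]
    simp only [Function.comp_def, Fin.prod_consEquiv_apply, norm_mul]
    exact hg.mul_of_nonneg ih (fun _ => norm_nonneg _) (fun _ => norm_nonneg _)

lemma hasSum_prod_tuple [CompleteSpace 𝕜] (hg : Summable (‖g ·‖)) (n : ℕ) :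
    HasSum (fun v : Fin n → α => ∏ i, g (v i)) ((∑' a, g a) ^ n) := by
  induction n with
  | zero => simp
  | succ n ih =>
    rw [← (Fin.consEquiv fun _ => α).hasSum_iff]
    simp only [Function.comp_def, Fin.prod_consEquiv_apply]
    rw [pow_succ', ← ih.tsum_eq, tsum_mul_tsum_of_summable_norm hg (summable_norm_prod_tuple hg n)]
    exact (summable_mul_of_summable_norm hg (summable_norm_prod_tuple hg n)).hasSum

lemma hasSum_list_prod_map [CompleteSpace 𝕜] (hg : Summable (‖g ·‖)) (hr : ∑' a, ‖g a‖ < 1) :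
    HasSum (fun l : List α => (l.map g).prod) (1 - ∑' a, g a)⁻¹ := by
  have hnorm : Summable fun p : Σ n, Fin n → α => ‖∏ i, g (p.2 i)‖ := by
    refine (summable_sigma_of_nonneg fun _ => norm_nonneg _).2
      ⟨summable_norm_prod_tuple hg, ?_⟩
    simp_rw [norm_prod, (hasSum_prod_tuple (g := (‖g ·‖)) (by simpa using hg) _).tsum_eq]
    exact summable_geometric_of_lt_one (tsum_nonneg fun _ => norm_nonneg _) hr
  have hsigma := hnorm.of_norm.hasSum
  rw [hnorm.of_norm.tsum_sigma, tsum_congr fun n => (hasSum_prod_tuple hg n).tsum_eq,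
      tsum_geometric_of_norm_lt_one ((norm_tsum_le_tsum_norm hg).trans_lt hr)] at hsigma
  rw [← List.equivSigmaTuple.symm.hasSum_iff]
  have hcomp : (fun l : List α => (l.map g).prod) ∘ List.equivSigmaTuple.symm =
      fun p => ∏ i, g (p.2 i) := by
    ext ⟨n, v⟩
    simp [List.equivSigmaTuple, List.map_ofFn, List.prod_ofFn]
  rw [hcomp]
  exact hsigma

end TupleProducts

noncomputable def listSubtypeEquiv {α : Type*} (p : α → Prop) :
    List {a // p a} ≃ {l : List α // ∀ a ∈ l, p a} :=
  Equiv.ofBijective (fun l => ⟨l.map Subtype.val, by simp +contextual⟩) <| by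
    refine ⟨fun l₁ l₂ h => (List.map_injective_iff.2 Subtype.val_injective) congr($h.1), ?_⟩
    rintro ⟨l, hl⟩
    lift l to List {a // p a} using hl
    exact ⟨l, rfl⟩

lemma List.prod_map_mul_pow {M : Type*} [CommMonoid M] (z q : M) (l : List ℕ) :
    (l.map fun n => z * q ^ n).prod = z ^ l.length * q ^ l.sum := by
  induction l with
  | nil => simp
  | cons a l ih =>
    rw [List.map_cons, List.prod_cons, ih, List.length_cons, List.sum_cons, pow_succ', pow_add,
      mul_mul_mul_comm]

lemma tsum_pow_subtype_le_of_forall_pos {S : Set ℕ} (hS : ∀ n ∈ S, 0 < n) {x : ℝ} (hx0 : 0 ≤ x)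
    (hx1 : x < 1) : ∑' n : S, x ^ (n : ℕ) ≤ x / (1 - x) := by
  have hgeo := summable_geometric_of_lt_one hx0 hx1
  calc ∑' n : S, x ^ (n : ℕ) ≤ ∑' m : ℕ, x * x ^ m := by
        refine (hgeo.subtype S).tsum_le_tsum_of_inj (fun n => (n : ℕ) - 1) ?_
          (fun _ _ => by positivity) ?_ (hgeo.mul_left x)
        · intro a b hab
          have := hS a a.2; have := hS b b.2
          exact Subtype.ext (by simp only at hab; omega)
        · intro n
          rw [← pow_succ', Nat.sub_add_cancel (hS n n.2)]
    _ = x / (1 - x) := by rw [tsum_mul_left, tsum_geometric_of_lt_one hx0 hx1, div_eq_mul_inv]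

section PowersOnPositiveSet

variable {𝕜 : Type*} [NormedField 𝕜] {S : Set ℕ} {z q : 𝕜}

lemma summable_norm_mul_pow_subtype (hq : ‖q‖ < 1) :
    Summable fun n : S => ‖z * q ^ (n : ℕ)‖ := by
  simp only [norm_mul, norm_pow]
  exact ((summable_geometric_of_lt_one (norm_nonneg q) hq).subtype S).mul_left ‖z‖

lemma tsum_norm_mul_pow_subtype_lt_one (hS : ∀ n ∈ S, 0 < n) (hq : ‖q‖ * (1 + ‖z‖) < 1) :
    ∑' n : S, ‖z * q ^ (n : ℕ)‖ < 1 := by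
  have hq1 : ‖q‖ < 1 := by nlinarith [norm_nonneg z, norm_nonneg q]
  simp only [norm_mul, norm_pow, tsum_mul_left]
  calc ‖z‖ * ∑' n : S, ‖q‖ ^ (n : ℕ) ≤ ‖z‖ * (‖q‖ / (1 - ‖q‖)) := by
        gcongr
        exact tsum_pow_subtype_le_of_forall_pos hS (norm_nonneg q) hq1
    _ < 1 := by
        rw [mul_div_assoc', div_lt_one (by linarith)]
        linarith

end PowersOnPositiveSet

/-- **Proposition 1.** For `S` a set of positive integers and `z, q ∈ ℂ` with
`|q| < 1/(1+|z|)`, the family `z^{ℓ(c)} q^{|c|}` over compositions with parts in `S`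
is summable, `1 - z ∑_{n∈S} q^n ≠ 0`, and the sum equals `1/(1 - z ∑_{n∈S} q^n)`. -/
theorem composition_generating_function
    (S : Set ℕ) (hS : ∀ n ∈ S, 0 < n) (z q : ℂ)
    (hq : ‖q‖ < 1 / (1 + ‖z‖)) :
    Summable (fun c : {l : List ℕ // ∀ i ∈ l, i ∈ S} =>
        z ^ c.val.length * q ^ c.val.sum) ∧
    1 - z * ∑' n : S, q ^ (n : ℕ) ≠ 0 ∧
    ∑' c : {l : List ℕ // ∀ i ∈ l, i ∈ S}, z ^ c.val.length * q ^ c.val.sum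
      = (1 - z * ∑' n : S, q ^ (n : ℕ))⁻¹ := by
  set g : S → ℂ := fun n => z * q ^ (n : ℕ)
  have hqz : ‖q‖ * (1 + ‖z‖) < 1 := (lt_div_iff₀ (by positivity)).1 hq
  have hg : Summable fun n => ‖g n‖ :=
    summable_norm_mul_pow_subtype (by nlinarith [norm_nonneg z, norm_nonneg q])
  have hr : ∑' n, ‖g n‖ < 1 := tsum_norm_mul_pow_subtype_lt_one hS hqz
  have hne : 1 - ∑' n, g n ≠ 0 := by
    have hlt : ‖∑' n, g n‖ < 1 := (norm_tsum_le_tsum_norm hg).trans_lt hr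
    exact sub_ne_zero.2 fun h => by simp [← h] at hlt
  have hcomp : (fun c : {l : List ℕ // ∀ i ∈ l, i ∈ S} => z ^ c.val.length * q ^ c.val.sum) ∘
      listSubtypeEquiv (· ∈ S) = fun l => (l.map g).prod := by
    ext l
    simp [listSubtypeEquiv, g, ← List.prod_map_mul_pow]
  have hsum := hasSum_list_prod_map hg hr
  rw [← hcomp, (listSubtypeEquiv _).hasSum_iff, tsum_mul_left] at hsum
  rw [tsum_mul_left] at hne
  exact ⟨hsum.summable, hne, hsum.tsum_eq⟩
end

section
/- For every n ≥ 0, the number pod(n) of partitions of n in which no odd part is repeated satisfies pod(n) = (−1)^n ∑_{c∈C_{P₃}, |c|=n} (−1)^{ℓ(c)}, where the (finite) sum is over all compositions of size n with every part a triangular number. -/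
/-!
Put `ψ(q) = ∑_{j ≥ 0} q^{j(j+1)/2}`. Removing the first part of a composition shows that the
signed counts `a(n) = ∑_c (-1)^{ℓ(c)}` over compositions of `n` into triangular parts have
generating function `1/ψ(q)`. Gauss's identity `ψ(q) (q;q²)_∞ = (q²;q²)_∞` turns this into
`(q;q²)_∞ / (q²;q²)_∞`, and the substitution `q ↦ -q` gives `∏_k (1 + q^{2k+1}) / (1 - q^{2k+2})`,
the generating function of `pod`.

Every series identity is proved modulo `X^m` with finite products. For Gauss's identity, the
q-binomial theorem `∏_{i<M} (y + q^i z) = ∑_k [M, k]_q q^{k(k-1)/2} z^k y^{M-k}` at `M = 2N+1`,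
`y = q^N`, `z = 1` becomes, after cancelling a power of `q`, the finite Jacobi triple product
`∑_{i ≤ N} ([2N+1, N-i]_q + [2N+1, N+1+i]_q) q^{i(i+1)/2} = 2 (-q;q)_N²`.
Modulo `X^m` and for `N` large, every Gaussian binomial that survives is `1/(q;q)_∞`, so
`ψ = (-q;q)_∞² (q;q)_∞`, and Euler's `(-q;q)_∞ (q;q²)_∞ = 1` finishes.
-/

open PowerSeries Finset
open scoped PowerSeries.WithPiTopology

noncomputable section

namespace PodComposition

variable {R : Type*} [CommRing R]

abbrev modX (m : ℕ) : R⟦X⟧ →+* R⟦X⟧ ⧸ Ideal.span {(X : R⟦X⟧) ^ m} := Ideal.Quotient.mk _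

lemma modX_eq_iff {m : ℕ} {f g : R⟦X⟧} :
    modX m f = modX m g ↔ ∀ i < m, coeff i f = coeff i g := by
  simp only [Ideal.Quotient.eq, Ideal.mem_span_singleton, X_pow_dvd_iff, map_sub, sub_eq_zero]

lemma modX_X_pow {m d : ℕ} (h : m ≤ d) : modX m (X ^ d : R⟦X⟧) = 0 := by
  rw [Ideal.Quotient.eq_zero_iff_mem, Ideal.mem_span_singleton]
  exact pow_dvd_pow X h

lemma modX_one_add_X_pow {m d : ℕ} (h : m ≤ d) : modX m (1 + X ^ d : R⟦X⟧) = 1 := by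
  rw [map_add, modX_X_pow h, add_zero, map_one]

lemma modX_one_sub_X_pow {m d : ℕ} (h : m ≤ d) : modX m (1 - X ^ d : R⟦X⟧) = 1 := by
  rw [map_sub, modX_X_pow h, sub_zero, map_one]

lemma modX_prod_of_subset {ι : Type*} {m : ℕ} {s t : Finset ι} {f : ι → R⟦X⟧} (hst : s ⊆ t)
    (hf : ∀ i ∈ t, i ∉ s → modX m (f i) = 1) :
    modX m (∏ i ∈ t, f i) = modX m (∏ i ∈ s, f i) := by
  simp only [map_prod]
  exact (prod_subset hst hf).symm

lemma modX_prod_range_of_le {m k l : ℕ} {f : ℕ → R⟦X⟧} (hkl : k ≤ l)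
    (hf : ∀ i, k ≤ i → modX m (f i) = 1) :
    modX m (∏ i ∈ range l, f i) = modX m (∏ i ∈ range k, f i) :=
  modX_prod_of_subset (range_subset_range.mpr hkl) fun i _ hi => hf i (by simpa using hi)

lemma modX_rescale {m : ℕ} {f g : R⟦X⟧} (a : R) (h : modX m f = modX m g) :
    modX m (rescale a f) = modX m (rescale a g) := by
  rw [modX_eq_iff] at h ⊢
  intro i hi
  rw [coeff_rescale, coeff_rescale, h i hi]

lemma modX_cancel_two {m : ℕ} {f g : ℤ⟦X⟧} (h : modX m (2 * f) = modX m (2 * g)) :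
    modX m f = modX m g := by
  refine modX_eq_iff.mpr fun i hi => ?_
  have := modX_eq_iff.mp h i hi
  simp only [two_mul, map_add] at this
  omega

lemma eventually_modX_prod_eq_of_hasProd [TopologicalSpace R] [DiscreteTopology R] {ι : Type*}
    {g : ι → R⟦X⟧} {a : R⟦X⟧} (h : HasProd g a) (m : ℕ) :
    ∀ᶠ s in Filter.atTop, modX m (∏ i ∈ s, g i) = modX m a := by
  rw [HasProd, SummationFilter.unconditional_filter, WithPiTopology.tendsto_iff_coeff_tendsto]
    at h
  have hcoeff : ∀ d ∈ range m, ∀ᶠ s in Filter.atTop, coeff d (∏ i ∈ s, g i) = coeff d a :=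
    fun d _ => Filter.tendsto_pure.mp (by simpa only [nhds_discrete] using h d)
  filter_upwards [(Filter.eventually_all_finset _).mpr hcoeff] with s hs
  exact modX_eq_iff.mpr fun d hd => hs d (mem_range.mpr hd)

lemma choose_two_succ (k : ℕ) : (k + 1).choose 2 = k.choose 2 + k := by
  rw [Nat.choose_succ_succ, Nat.choose_one_right, add_comm]

lemma le_choose_two_succ (k : ℕ) : k ≤ (k + 1).choose 2 := by
  rw [choose_two_succ]; omega

lemma strictMono_choose_two_succ : StrictMono fun k => (k + 1).choose 2 :=
  strictMono_nat_of_lt_succ fun k => by rw [choose_two_succ (k + 1)]; omega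

lemma prod_range_two_mul {M : Type*} [CommMonoid M] (f : ℕ → M) (L : ℕ) :
    ∏ i ∈ range (2 * L), f i = ∏ k ∈ range L, f (2 * k) * f (2 * k + 1) := by
  induction L with
  | zero => simp
  | succ L ih =>
    rw [show 2 * (L + 1) = 2 * L + 1 + 1 by ring, prod_range_succ, prod_range_succ, ih,
      prod_range_succ, mul_assoc]

def qPoch (k : ℕ) : R⟦X⟧ := ∏ i ∈ range k, (1 - X ^ (i + 1))

def negQPoch (k : ℕ) : R⟦X⟧ := ∏ i ∈ range k, (1 + X ^ (i + 1))

def oddQPoch (k : ℕ) : R⟦X⟧ := ∏ i ∈ range k, (1 - X ^ (2 * i + 1))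

def evenQPoch (k : ℕ) : R⟦X⟧ := ∏ i ∈ range k, (1 - X ^ (2 * i + 2))

lemma qPoch_succ (k : ℕ) : (qPoch (k + 1) : R⟦X⟧) = qPoch k * (1 - X ^ (k + 1)) :=
  prod_range_succ _ _

lemma negQPoch_succ (k : ℕ) : (negQPoch (k + 1) : R⟦X⟧) = negQPoch k * (1 + X ^ (k + 1)) :=
  prod_range_succ _ _

lemma isUnit_qPoch (k : ℕ) : IsUnit (qPoch k : R⟦X⟧) := by
  simp [qPoch, isUnit_iff_constantCoeff]

lemma isUnit_evenQPoch (k : ℕ) : IsUnit (evenQPoch k : R⟦X⟧) := by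
  simp [evenQPoch, isUnit_iff_constantCoeff]

lemma negQPoch_mul_qPoch (k : ℕ) : (negQPoch k * qPoch k : R⟦X⟧) = evenQPoch k := by
  rw [negQPoch, qPoch, evenQPoch, ← prod_mul_distrib]
  refine prod_congr rfl fun i _ => ?_
  rw [show 2 * i + 2 = (i + 1) + (i + 1) by ring, pow_add]
  ring

lemma oddQPoch_mul_evenQPoch (k : ℕ) : (oddQPoch k * evenQPoch k : R⟦X⟧) = qPoch (2 * k) := by
  induction k with
  | zero => simp [oddQPoch, evenQPoch, qPoch]
  | succ k ih =>
    rw [oddQPoch, evenQPoch, prod_range_succ, prod_range_succ, ← oddQPoch, ← evenQPoch,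
      show 2 * (k + 1) = 2 * k + 1 + 1 by ring, qPoch_succ, qPoch_succ, ← ih]
    ring

lemma modX_qPoch_of_le {m k : ℕ} (h : m ≤ k) :
    modX m (qPoch k : R⟦X⟧) = modX m (qPoch m) :=
  modX_prod_range_of_le h fun _ hi => modX_one_sub_X_pow (by omega)

lemma modX_negQPoch_of_le {m k : ℕ} (h : m ≤ k) :
    modX m (negQPoch k : R⟦X⟧) = modX m (negQPoch m) :=
  modX_prod_range_of_le h fun _ hi => modX_one_add_X_pow (by omega)

theorem modX_negQPoch_mul_oddQPoch {m k : ℕ} (h : m ≤ k) :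
    modX m (negQPoch k * oddQPoch k : R⟦X⟧) = 1 := by
  have hprod : negQPoch k * oddQPoch k * qPoch k = (qPoch (2 * k) : R⟦X⟧) := by
    rw [← oddQPoch_mul_evenQPoch, ← negQPoch_mul_qPoch]; ring
  rw [← ((isUnit_qPoch k).map (modX m)).mul_eq_right, ← map_mul, hprod,
    modX_qPoch_of_le (by omega : m ≤ 2 * k), modX_qPoch_of_le h]

def gaussBinom : ℕ → ℕ → R⟦X⟧
  | _, 0 => 1
  | 0, _ + 1 => 0
  | M + 1, k + 1 => gaussBinom M (k + 1) + X ^ (M - k) * gaussBinom M k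

lemma gaussBinom_succ_succ (M k : ℕ) : (gaussBinom (M + 1) (k + 1) : R⟦X⟧) =
    gaussBinom M (k + 1) + X ^ (M - k) * gaussBinom M k := rfl

lemma gaussBinom_eq_zero {M k : ℕ} (h : M < k) : (gaussBinom M k : R⟦X⟧) = 0 := by
  obtain ⟨k, rfl⟩ : ∃ k', k = k' + 1 := ⟨k - 1, by omega⟩
  induction M generalizing k with
  | zero => rfl
  | succ M ih =>
    obtain ⟨k, rfl⟩ : ∃ k', k = k' + 1 := ⟨k - 1, by omega⟩
    rw [gaussBinom_succ_succ, ih (k + 1) (by omega), ih k (by omega), mul_zero, add_zero]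

theorem gaussBinom_mul_qPoch {M k : ℕ} (h : k ≤ M) :
    (gaussBinom M k * qPoch k * qPoch (M - k) : R⟦X⟧) = qPoch M := by
  induction M generalizing k with
  | zero =>
    obtain rfl : k = 0 := by omega
    simp [gaussBinom, qPoch]
  | succ M ih =>
    rcases k with _ | k
    · simp [gaussBinom, qPoch]
    have hleft : (gaussBinom M (k + 1) * qPoch (k + 1) * qPoch (M - k) : R⟦X⟧) =
        qPoch M * (1 - X ^ (M - k)) := by
      rcases (Nat.le_of_lt_succ h).lt_or_eq with hk | rfl
      · rw [show M - k = M - (k + 1) + 1 by omega, qPoch_succ (M - (k + 1)), ← ih hk]; ring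
      · rw [gaussBinom_eq_zero (Nat.lt_succ_self k), Nat.sub_self, pow_zero]; ring
    have hright : X ^ (M - k) * gaussBinom M k * qPoch (k + 1) * qPoch (M - k) =
        X ^ (M - k) * (1 - X ^ (k + 1)) * (qPoch M : R⟦X⟧) := by
      rw [qPoch_succ k, ← ih (k := k) (by omega)]; ring
    have hpow : (X : R⟦X⟧) ^ (M - k) * X ^ (k + 1) = X ^ (M + 1) := by
      rw [← pow_add]; congr 1; omega
    rw [Nat.add_sub_add_right, qPoch_succ M, gaussBinom_succ_succ]
    linear_combination hleft + hright - qPoch M * hpow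

lemma modX_gaussBinom_mul_qPoch {m M k : ℕ} (hk : m ≤ k) (hkM : k + m ≤ M) :
    modX m (gaussBinom M k * qPoch m : R⟦X⟧) = 1 := by
  have h := congrArg (modX m) (gaussBinom_mul_qPoch (R := R) (by omega : k ≤ M))
  rw [map_mul, map_mul, modX_qPoch_of_le hk, modX_qPoch_of_le (by omega : m ≤ M - k),
    modX_qPoch_of_le (by omega : m ≤ M)] at h
  rw [map_mul]
  exact ((isUnit_qPoch m).map (modX m)).mul_eq_right.mp h

theorem prod_add_X_pow_mul_eq_sum_gaussBinom (y z : R⟦X⟧) (M : ℕ) :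
    ∏ i ∈ range M, (y + X ^ i * z) =
      ∑ k ∈ range (M + 1), gaussBinom M k * X ^ k.choose 2 * z ^ k * y ^ (M - k) := by
  induction M with
  | zero => simp [gaussBinom]
  | succ M ih =>
    have hlow : y * ∑ k ∈ range (M + 1), gaussBinom M k * X ^ k.choose 2 * z ^ k * y ^ (M - k) =
        ∑ k ∈ range (M + 1), gaussBinom M (k + 1) * X ^ (k + 1).choose 2 * z ^ (k + 1) *
          y ^ (M - k) + y ^ (M + 1) := by
      conv_lhs => rw [sum_range_succ', mul_add, mul_sum]
      conv_rhs => rw [sum_range_succ, gaussBinom_eq_zero (Nat.lt_succ_self M)]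
      simp only [gaussBinom, Nat.choose_zero_succ, pow_zero, mul_one, one_mul, Nat.sub_zero,
        zero_mul, add_zero, ← pow_succ']
      congr 1
      refine sum_congr rfl fun k hk => ?_
      rw [show M - k = M - (k + 1) + 1 by simp at hk; omega]; ring
    have hhigh : X ^ M * z * ∑ k ∈ range (M + 1), gaussBinom M k * X ^ k.choose 2 * z ^ k *
        y ^ (M - k) = ∑ k ∈ range (M + 1), X ^ (M - k) * gaussBinom M k * X ^ (k + 1).choose 2 *
          z ^ (k + 1) * y ^ (M - k) := by
      rw [mul_sum]
      refine sum_congr rfl fun k hk => ?_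
      rw [choose_two_succ, show (X : R⟦X⟧) ^ M = X ^ (M - k) * X ^ k by
        rw [← pow_add]; congr 1; simp at hk; omega]
      ring
    rw [prod_range_succ, ih, mul_add, mul_comm _ y, mul_comm _ (X ^ M * z), hlow, hhigh]
    conv_rhs => rw [sum_range_succ']
    simp only [Nat.add_sub_add_right, add_mul, sum_add_distrib, gaussBinom, Nat.choose_zero_succ,
      pow_zero, mul_one, one_mul, Nat.sub_zero]
    ring

lemma prod_X_pow_add_X_pow (N : ℕ) :
    ∏ i ∈ range (2 * N + 1), (X ^ N + X ^ i : R⟦X⟧) =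
      X ^ ((N + 1).choose 2 + N * N) * (2 * negQPoch N ^ 2) := by
  induction N with
  | zero => simp [negQPoch]; norm_num
  | succ N ih =>
    have hshift (i : ℕ) : (X ^ (N + 1) + X ^ (i + 1) : R⟦X⟧) = X * (X ^ N + X ^ i) := by ring
    have hexp : (N + 1 + 1).choose 2 + (N + 1) * (N + 1) =
        (N + 1).choose 2 + N * N + (3 * N + 2) := by
      rw [choose_two_succ (N + 1)]; ring
    rw [show 2 * (N + 1) + 1 = 2 * N + 1 + 1 + 1 by ring, prod_range_succ']
    simp only [hshift, prod_mul_distrib, prod_const, card_range]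
    rw [prod_range_succ, ih, hexp, negQPoch_succ]
    ring

theorem sum_gaussBinom_centered (N : ℕ) :
    ∑ i ∈ range (N + 1), (gaussBinom (2 * N + 1) (N - i) + gaussBinom (2 * N + 1) (N + 1 + i)) *
      X ^ (i + 1).choose 2 = (2 * negQPoch N ^ 2 : R⟦X⟧) := by
  apply X_pow_mul_cancel (k := (N + 1).choose 2 + N * N)
  rw [← prod_X_pow_add_X_pow]
  have hbinom := prod_add_X_pow_mul_eq_sum_gaussBinom (X ^ N : R⟦X⟧) 1 (2 * N + 1)
  simp only [mul_one, one_pow] at hbinom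
  rw [hbinom, mul_sum]
  conv_rhs => rw [show 2 * N + 1 + 1 = (N + 1) + (N + 1) by ring, sum_range_add,
    ← sum_range_reflect, ← sum_add_distrib]
  refine sum_congr rfl fun i hi => ?_
  obtain ⟨d, rfl⟩ := Nat.exists_eq_add_of_le (Nat.lt_succ_iff.mp (mem_range.mp hi))
  have hlow : (X : R⟦X⟧) ^ d.choose 2 * (X ^ (i + d)) ^ (2 * (i + d) + 1 - d) =
      X ^ ((i + d + 1).choose 2 + (i + d) * (i + d)) * X ^ (i + 1).choose 2 := by
    rw [← pow_mul, ← pow_add, ← pow_add, show 2 * (i + d) + 1 - d = i + d + 1 + i by omega]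
    congr 1
    qify [Nat.cast_choose_two]
    ring
  have hhigh : (X : R⟦X⟧) ^ (i + d + 1 + i).choose 2 *
      (X ^ (i + d)) ^ (2 * (i + d) + 1 - (i + d + 1 + i)) =
      X ^ ((i + d + 1).choose 2 + (i + d) * (i + d)) * X ^ (i + 1).choose 2 := by
    rw [← pow_mul, ← pow_add, ← pow_add, show 2 * (i + d) + 1 - (i + d + 1 + i) = d by omega]
    congr 1
    qify [Nat.cast_choose_two]
    ring
  rw [show i + d + 1 - 1 - i = d by omega, show i + d - i = d by omega, mul_assoc, hlow,
    mul_assoc, hhigh]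
  ring

open scoped Classical in
def psi : ℤ⟦X⟧ := mk fun d => if ∃ i, (i + 1).choose 2 = d then 1 else 0

lemma modX_psi {m K : ℕ} (h : m ≤ K) :
    modX m psi = modX m (∑ i ∈ range K, X ^ (i + 1).choose 2) := by
  refine modX_eq_iff.mpr fun d hd => ?_
  simp only [psi, coeff_mk, map_sum, coeff_X_pow]
  split_ifs with hex
  · obtain ⟨i, rfl⟩ := hex
    rw [sum_eq_single_of_mem i (mem_range.mpr (by linarith [le_choose_two_succ i]))]
    · simp
    · intro j _ hj
      rw [if_neg fun hji => hj (strictMono_choose_two_succ.injective hji.symm)]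
  · exact (sum_eq_zero fun i _ => if_neg fun hi => hex ⟨i, hi.symm⟩).symm

theorem modX_negQPoch_sq_mul_qPoch {m k : ℕ} (h : m ≤ k) :
    modX m (negQPoch k ^ 2 * qPoch k) = modX m psi := by
  set N := 2 * m with hN
  -- Since `N = 2 m`, a term with `(i + 1).choose 2 < m` has both binomial indices at distance
  -- at least `m` from `0` and from `2 N + 1`; the remaining terms vanish modulo `X ^ m`.
  have hterm : ∀ i ∈ range (N + 1),
      modX m ((gaussBinom (2 * N + 1) (N - i) + gaussBinom (2 * N + 1) (N + 1 + i)) *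
        X ^ (i + 1).choose 2 * qPoch m) = modX m (2 * X ^ (i + 1).choose 2 : ℤ⟦X⟧) := by
    intro i _
    rcases lt_or_ge ((i + 1).choose 2) m with hi | hi
    · have hi' := (le_choose_two_succ i).trans_lt hi
      have h1 := modX_gaussBinom_mul_qPoch (R := ℤ) (m := m) (M := 2 * N + 1) (k := N - i)
        (by omega) (by omega)
      have h2 := modX_gaussBinom_mul_qPoch (R := ℤ) (m := m) (M := 2 * N + 1) (k := N + 1 + i)
        (by omega) (by omega)
      simp only [map_mul, map_add, map_ofNat] at h1 h2 ⊢
      linear_combination (modX m (X ^ (i + 1).choose 2)) * (h1 + h2)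
    · rw [map_mul, map_mul, map_mul, modX_X_pow hi, mul_zero, zero_mul, mul_zero]
  have hsum := congrArg (fun f => modX m (f * qPoch m)) (sum_gaussBinom_centered (R := ℤ) N)
  simp only [sum_mul, map_sum] at hsum
  rw [sum_congr rfl hterm, ← map_sum, ← mul_sum, map_mul, ← modX_psi (by omega), ← map_mul]
    at hsum
  apply modX_cancel_two
  rw [hsum]
  simp only [map_mul, map_pow, modX_negQPoch_of_le h, modX_negQPoch_of_le (by omega : m ≤ N),
    modX_qPoch_of_le h]
  ring

theorem modX_psi_mul_oddQPoch {m k : ℕ} (h : m ≤ k) :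
    modX m (psi * oddQPoch k) = modX m (evenQPoch k) := by
  have hsplit : negQPoch k ^ 2 * qPoch k * oddQPoch k =
      (evenQPoch k : ℤ⟦X⟧) * (negQPoch k * oddQPoch k) := by
    rw [← negQPoch_mul_qPoch]; ring
  rw [map_mul, ← modX_negQPoch_sq_mul_qPoch h, ← map_mul, hsplit, map_mul,
    modX_negQPoch_mul_oddQPoch h, mul_one]

def compositionSeries (w : ℕ → R) : R⟦X⟧ :=
  PowerSeries.mk fun n => ∑ c : Composition n, (c.blocks.map w).prod

lemma sum_composition_succ (w : ℕ → R) (n : ℕ) :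
    ∑ c : Composition (n + 1), (c.blocks.map w).prod =
      ∑ t ∈ range (n + 1), w (t + 1) * ∑ c : Composition (n - t), (c.blocks.map w).prod := by
  have hne (c : Composition (n + 1)) : c.blocks ≠ [] := by simp [Composition.blocks_eq_nil]
  have hsum (c : Composition (n + 1)) : c.blocks.head! + c.blocks.tail.sum = n + 1 := by
    rw [← List.sum_cons, List.cons_head!_tail (hne c), c.blocks_sum]
  have hpos (c : Composition (n + 1)) : 0 < c.blocks.head! :=
    c.blocks_pos (List.head!_mem_self (hne c))
  simp_rw [mul_sum]
  rw [sum_sigma']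
  symm
  refine sum_bij'
    (fun x hx => ⟨(x.1 + 1) :: x.2.blocks,
      fun hi => (List.mem_cons.mp hi).elim (fun h => h ▸ Nat.succ_pos _) x.2.blocks_pos, by
        have := mem_range.mp (mem_sigma.mp hx).1
        rw [List.sum_cons, x.2.blocks_sum]; omega⟩)
    (fun c _ => ⟨c.blocks.head! - 1, ⟨c.blocks.tail,
      fun hi => c.blocks_pos (List.mem_of_mem_tail hi), by
        have := hsum c; have := hpos c; omega⟩⟩)
    (fun _ _ => mem_univ _) (fun c _ => ?_) (fun _ _ => rfl) (fun c _ => ?_) (fun x _ => ?_)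
  · have := hsum c
    have := hpos c
    simp only [mem_sigma, mem_range, mem_univ, and_true]; omega
  · exact Composition.ext
      (by simpa [Nat.sub_add_cancel (hpos c)] using List.cons_head!_tail (hne c))
  · simp [List.prod_cons]

theorem one_sub_X_mul_mul_compositionSeries (w : ℕ → R) :
    (1 - X * PowerSeries.mk fun t => w (t + 1)) * compositionSeries w = 1 := by
  ext (_ | n)
  · have hnil (c : Composition 0) : c.blocks = [] := c.blocks_eq_nil.mpr rfl
    simp [compositionSeries, hnil, composition_card]
  · rw [sub_mul, one_mul, mul_assoc, map_sub, coeff_succ_X_mul, coeff_mul,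
      Nat.sum_antidiagonal_eq_sum_range_succ_mk, compositionSeries]
    simp [sum_composition_succ]

lemma prod_map_ite_zero {α M : Type*} [MonoidWithZero M] (p : α → Prop) [DecidablePred p]
    (a : M) (l : List α) :
    (l.map fun i => if p i then a else 0).prod = if ∀ i ∈ l, p i then a ^ l.length else 0 := by
  induction l with
  | nil => simp
  | cons x l ih => by_cases hx : p x <;> simp [hx, ih, pow_succ']

def IsTriangular (t : ℕ) : Prop := ∃ m : ℕ, 1 ≤ m ∧ 2 * t = m * (m + 1)

lemma exists_choose_two_succ_eq_iff {t : ℕ} (ht : t ≠ 0) :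
    (∃ i, (i + 1).choose 2 = t) ↔ IsTriangular t := by
  have htwo (i : ℕ) : 2 * (i + 1).choose 2 = i * (i + 1) := by
    have := Nat.add_one_mul_choose_eq i 1
    rw [Nat.choose_one_right] at this
    linarith
  constructor
  · rintro ⟨i, rfl⟩
    refine ⟨i, Nat.one_le_iff_ne_zero.mpr ?_, htwo i⟩
    rintro rfl
    exact ht rfl
  · rintro ⟨i, -, hi⟩
    exact ⟨i, by linarith [htwo i]⟩

open scoped Classical in
def triangularWeight (t : ℕ) : ℤ := if IsTriangular t then -1 else 0

lemma psi_eq_one_sub : psi = 1 - X * PowerSeries.mk fun t => triangularWeight (t + 1) := by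
  ext (_ | d)
  · simp [psi]
    exact ⟨0, rfl⟩
  · rw [psi, coeff_mk, map_sub, coeff_succ_X_mul, coeff_mk, coeff_one, if_neg d.succ_ne_zero,
      triangularWeight, exists_choose_two_succ_eq_iff d.succ_ne_zero]
    split_ifs <;> simp

open scoped Classical in
lemma coeff_compositionSeries_triangularWeight (n : ℕ) :
    coeff n (compositionSeries triangularWeight) =
      ∑ c ∈ univ.filter (fun c : Composition n => ∀ i ∈ c.blocks, IsTriangular i),
        (-1 : ℤ) ^ c.length := by
  rw [compositionSeries, coeff_mk, sum_filter]
  exact sum_congr rfl fun c _ => prod_map_ite_zero _ _ _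

def podWeight (i c : ℕ) : ℤ := if Odd i → c ≤ 1 then 1 else 0

/-- The factor of `Nat.Partition.hasProd_genFun podWeight` belonging to the part `i + 1`. -/
def podFactor (i : ℕ) : ℤ⟦X⟧ := 1 + ∑' j, podWeight (i + 1) (j + 1) • X ^ ((i + 1) * (j + 1))

open scoped Classical in
lemma coeff_genFun_podWeight (n : ℕ) :
    coeff n (Nat.Partition.genFun podWeight) =
      #{p : n.Partition | ∀ i, Odd i → p.parts.count i ≤ 1} := by
  rw [Nat.Partition.coeff_genFun, card_filter]
  push_cast
  refine sum_congr rfl fun p _ => ?_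
  rw [Finsupp.prod]
  unfold podWeight
  rw [prod_boole]
  simp only [Multiset.toFinsupp_support, Multiset.toFinsupp_apply]
  congr 1
  refine propext ⟨fun h i hi => ?_, fun h i _ => h i⟩
  by_cases hmem : i ∈ p.parts
  · exact h i (Multiset.mem_toFinset.mpr hmem) hi
  · rw [Multiset.count_eq_zero_of_notMem hmem]; exact zero_le_one

lemma podFactor_of_odd {i : ℕ} (hi : Odd (i + 1)) : podFactor i = 1 + X ^ (i + 1) := by
  rw [podFactor, tsum_eq_single 0 fun j hj => by simp [podWeight, hi, hj]]
  simp [podWeight]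

lemma one_sub_X_pow_mul_podFactor_of_even {i : ℕ} (hi : ¬Odd (i + 1)) :
    (1 - X ^ (i + 1)) * podFactor i = 1 := by
  have hgeom : podFactor i = ∑' j, (X ^ (i + 1) : ℤ⟦X⟧) ^ j := by
    have hs : Summable fun j => (X ^ (i + 1) : ℤ⟦X⟧) ^ j :=
      WithPiTopology.summable_pow_of_constantCoeff_eq_zero (by simp)
    rw [hs.tsum_eq_zero_add, pow_zero]
    unfold podFactor podWeight
    simp only [hi, false_imp_iff, if_true, one_smul, pow_mul]
  rw [hgeom]
  exact WithPiTopology.one_sub_mul_tsum_pow_of_constantCoeff_eq_zero (by simp)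

lemma modX_podFactor {m i : ℕ} (h : m ≤ i + 1) : modX m (podFactor i) = 1 := by
  by_cases hi : Odd (i + 1)
  · rw [podFactor_of_odd hi, modX_one_add_X_pow h]
  · have := congrArg (modX m) (one_sub_X_pow_mul_podFactor_of_even hi)
    rwa [map_mul, modX_one_sub_X_pow h, one_mul, map_one] at this

lemma modX_genFun_podWeight {m L : ℕ} (h : m ≤ 2 * L) :
    modX m (Nat.Partition.genFun podWeight) = modX m (∏ i ∈ range (2 * L), podFactor i) := by
  obtain ⟨s, hs, hLs⟩ :=
    ((eventually_modX_prod_eq_of_hasProd (Nat.Partition.hasProd_genFun podWeight) m).and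
      (Filter.eventually_ge_atTop (range (2 * L)))).exists
  rw [← hs]
  exact modX_prod_of_subset hLs fun i _ hi => modX_podFactor (by simp at hi; omega)

lemma rescale_neg_one_X_pow (d : ℕ) : rescale (-1 : R) (X ^ d) = (-1) ^ d * X ^ d := by
  rw [map_pow, rescale_X, ← mul_pow, map_neg, map_one]

lemma rescale_podFactor_two_mul (k : ℕ) :
    rescale (-1 : ℤ) (podFactor (2 * k)) = 1 - X ^ (2 * k + 1) := by
  rw [podFactor_of_odd ⟨k, rfl⟩, map_add, map_one, rescale_neg_one_X_pow,
    Odd.neg_one_pow ⟨k, rfl⟩]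
  ring

lemma one_sub_X_pow_mul_rescale_podFactor_two_mul_add_one (k : ℕ) :
    (1 - X ^ (2 * k + 2)) * rescale (-1 : ℤ) (podFactor (2 * k + 1)) = 1 := by
  have h := congrArg (rescale (-1 : ℤ))
    (one_sub_X_pow_mul_podFactor_of_even (i := 2 * k + 1) (by simp [Nat.odd_iff]; omega))
  rw [map_mul, map_sub, map_one, rescale_neg_one_X_pow, Even.neg_one_pow ⟨k + 1, by ring⟩,
    one_mul] at h
  exact h

theorem rescale_prod_podFactor_mul_evenQPoch (L : ℕ) :
    rescale (-1 : ℤ) (∏ i ∈ range (2 * L), podFactor i) * evenQPoch L = oddQPoch L := by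
  rw [prod_range_two_mul, map_prod, evenQPoch, oddQPoch, ← prod_mul_distrib]
  refine prod_congr rfl fun k _ => ?_
  rw [map_mul, rescale_podFactor_two_mul, mul_assoc, mul_comm _ (1 - X ^ (2 * k + 2)),
    one_sub_X_pow_mul_rescale_podFactor_two_mul_add_one, mul_one]

theorem modX_rescale_genFun_podWeight (m : ℕ) :
    modX m (rescale (-1 : ℤ) (Nat.Partition.genFun podWeight)) =
      modX m (compositionSeries triangularWeight) := by
  set F := rescale (-1 : ℤ) (∏ i ∈ range (2 * m), podFactor i)
  have hpsiF : modX m (psi * F) = 1 := by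
    rw [← ((isUnit_evenQPoch m).map (modX m)).mul_eq_right, ← map_mul, mul_assoc,
      rescale_prod_podFactor_mul_evenQPoch, modX_psi_mul_oddQPoch le_rfl]
  have hpsiA : psi * compositionSeries triangularWeight = 1 := by
    rw [psi_eq_one_sub]
    exact one_sub_X_mul_mul_compositionSeries _
  calc _ = modX m F := modX_rescale _ (modX_genFun_podWeight (by omega))
    _ = modX m (psi * F * compositionSeries triangularWeight) := by
      rw [mul_comm psi, mul_assoc, hpsiA, mul_one]
    _ = _ := by rw [map_mul, hpsiF, one_mul]

end PodComposition

end

open Classical in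
theorem pod_eq_composition_sum (n : ℕ) :
    (Nat.card {lam : Nat.Partition n // ∀ i, Odd i → lam.parts.count i ≤ 1} : ℤ)
      = (-1) ^ n *
        ∑ c ∈ Finset.univ.filter (fun c : Composition n => ∀ i ∈ c.blocks,
            ∃ m : ℕ, 1 ≤ m ∧ 2 * i = m * (m + 1)),
          (-1 : ℤ) ^ c.length := by
  open PodComposition in
  have hcoeff := modX_eq_iff.mp (modX_rescale_genFun_podWeight (n + 1)) n n.lt_succ_self
  rw [coeff_rescale, PodComposition.coeff_genFun_podWeight,
    PodComposition.coeff_compositionSeries_triangularWeight] at hcoeff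
  unfold PodComposition.IsTriangular at hcoeff
  rw [Nat.card_eq_fintype_card, Fintype.card_subtype, ← hcoeff, ← mul_assoc, ← mul_pow,
    neg_one_mul, neg_neg, one_pow, one_mul]
end

section
/- Let a : ℕ → ℂ with a(0) ≠ 0, and let g = ∑_{n≥0} a(n) Xⁿ be the corresponding formal power series over ℂ. Then for every n ≥ 0, the coefficient b(n) of Xⁿ in the multiplicative inverse power series g⁻¹ is given by the finite sum over compositions: b(n) = a(0)⁻¹ · ∑_{c∈C, |c|=n} ∏_{j a part of c} (−a(j)/a(0)), where the product is over the parts j of c counted with multiplicity (the empty composition contributing the empty product 1). -/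
/-!
Write `g = a₀ (1 - X h)` with `h = ∑ₙ (-a(n+1)/a₀) Xⁿ`. The generating function `F` of
compositions weighted by `f j = -a(j)/a₀` satisfies `F = 1 + X h F`, because removing the first
part `j` of a composition of `n` leaves a composition of `n - j`. Hence `F = (1 - X h)⁻¹` and
`g⁻¹ = a₀⁻¹ F`.
-/

open Finset.HasAntidiagonal PowerSeries

namespace Composition

/-- Prepending the block `i + 1` to a composition of `j`, where `i + j = n`. -/
noncomputable def consEquiv (n : ℕ) :
    (Σ p : antidiagonal n, Composition p.1.2) ≃ Composition (n + 1) :=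
  Equiv.ofBijective
    (fun x => ⟨(x.1.1.1 + 1) :: x.2.blocks,
      by
        rintro i (_ | ⟨_, hi⟩)
        exacts [Nat.succ_pos _, x.2.blocks_pos hi],
      by
        have := mem_antidiagonal.1 x.1.2
        simp only [List.sum_cons, x.2.blocks_sum]
        omega⟩)
    (by
      constructor
      · rintro ⟨⟨⟨i, j⟩, hij⟩, c⟩ ⟨⟨⟨i', j'⟩, hij'⟩, c'⟩ h
        simp only [Composition.ext_iff, List.cons.injEq, add_left_inj] at h
        obtain ⟨rfl, h⟩ := h
        obtain rfl : j = j' := by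
          rw [mem_antidiagonal] at hij hij'; omega
        obtain rfl : c = c' := Composition.ext h
        rfl
      · intro c
        obtain ⟨b, t, hc⟩ := List.exists_cons_of_ne_nil (c.blocks_eq_nil.not.2 n.succ_ne_zero)
        have hb : 1 ≤ b := c.one_le_blocks (hc ▸ List.mem_cons_self)
        have hsum : b + t.sum = n + 1 := by rw [← List.sum_cons, ← hc, c.blocks_sum]
        refine ⟨⟨⟨(b - 1, t.sum), mem_antidiagonal.2 (by omega)⟩,
          ⟨t, fun hi => c.blocks_pos (hc ▸ List.mem_cons_of_mem _ hi), rfl⟩⟩, ?_⟩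
        ext1
        simp only [hc, Nat.sub_add_cancel hb])

@[simp]
theorem blocks_consEquiv {n : ℕ} (x : Σ p : antidiagonal n, Composition p.1.2) :
    (consEquiv n x).blocks = (x.1.1.1 + 1) :: x.2.blocks :=
  rfl

end Composition

namespace PowerSeries

variable {R : Type*} [CommRing R]

noncomputable def compositionSeries (f : ℕ → R) : R⟦X⟧ :=
  mk fun n => ∑ c : Composition n, (c.blocks.map f).prod

theorem constantCoeff_compositionSeries (f : ℕ → R) :
    constantCoeff (compositionSeries f) = 1 := by
  have blocks_nil (c : Composition 0) : c.blocks = [] := c.blocks_eq_nil.2 rfl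
  simp [compositionSeries, ← coeff_zero_eq_constantCoeff_apply, blocks_nil, composition_card]

theorem coeff_succ_compositionSeries (f : ℕ → R) (n : ℕ) :
    coeff (n + 1) (compositionSeries f)
      = ∑ p ∈ antidiagonal n, f (p.1 + 1) * coeff p.2 (compositionSeries f) := by
  simp only [compositionSeries, coeff_mk]
  rw [← (Composition.consEquiv n).sum_comp, Fintype.sum_sigma,
    ← Finset.sum_coe_sort (antidiagonal n)]
  refine Finset.sum_congr rfl fun p _ => ?_
  simp [Finset.mul_sum]

theorem one_sub_X_mul_mul_compositionSeries (f : ℕ → R) :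
    (1 - X * mk fun n => f (n + 1)) * compositionSeries f = 1 := by
  ext (_ | n)
  · simp [constantCoeff_compositionSeries]
  · rw [sub_mul, one_mul, mul_assoc, map_sub, coeff_succ_X_mul, coeff_succ_compositionSeries,
      coeff_mul, coeff_one, if_neg n.succ_ne_zero, sub_eq_zero]
    simp only [coeff_mk]

theorem inv_mk_eq_C_mul_compositionSeries {k : Type*} [Field k] (a : ℕ → k)
    (ha : a 0 ≠ 0) : (mk a)⁻¹ = C (a 0)⁻¹ * compositionSeries fun j => -a j / a 0 := by
  have mk_eq : mk a = C (a 0) * (1 - X * mk fun n => -a (n + 1) / a 0) := by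
    ext (_ | n)
    · simp
    · rw [mul_sub, mul_one, mul_left_comm, map_sub, coeff_succ_X_mul, coeff_C_mul, coeff_mk,
        coeff_mk, coeff_C, if_neg n.succ_ne_zero, zero_sub, mul_div_cancel₀ _ ha, neg_neg]
  have inv_one_sub :
      (1 - X * mk fun n => -a (n + 1) / a 0)⁻¹ = compositionSeries fun j => -a j / a 0 := by
    rw [inv_eq_iff_mul_eq_one (by simp), mul_comm]
    exact one_sub_X_mul_mul_compositionSeries fun j => -a j / a 0
  rw [mk_eq, PowerSeries.mul_inv_rev, inv_one_sub, C_inv, mul_comm]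

end PowerSeries

/-- **Lemma (Salem; Schneider–Sills).** If `g = ∑ a(n) Xⁿ` with `a(0) ≠ 0`, then the
`n`-th coefficient of `1/g` is `a(0)⁻¹ ∑_{|c|=n} ∏_{j part of c} (-a(j)/a(0))`,
the sum being over all compositions of `n`. -/
theorem reciprocal_power_series_coeff_eq_composition_sum
    (a : ℕ → ℂ) (ha : a 0 ≠ 0) (n : ℕ) :
    PowerSeries.coeff n (PowerSeries.mk a)⁻¹
      = (a 0)⁻¹ * ∑ c : Composition n, (c.blocks.map (fun j => -a j / a 0)).prod := by
  rw [inv_mk_eq_C_mul_compositionSeries a ha, coeff_C_mul, compositionSeries, coeff_mk]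
end

section
/- Let T* be a set of integers ≥ 2 and let s ∈ ℂ be such that ∑_{n∈T*} n^{−Re(s)} < 1. Then the family (N(c)^{−s}) indexed by compositions c ∈ C_{T*} is summable, 1 − ∑_{n∈T*} n^{−s} ≠ 0, and ∑_{c∈C_{T*}} N(c)^{−s} = 1/(1 − ∑_{n∈T*} n^{−s}). -/
/-!
Writing `f n = n ^ (-s)` for `n ∈ T`, the summand of a composition `(n₁, …, nₖ)` is
`f n₁ ⋯ f nₖ`, so summing over the compositions of length `k` gives `(∑ f) ^ k` and summing over
all lengths gives the geometric series `∑ₖ (∑ f) ^ k = (1 - ∑ f)⁻¹`. The hypothesis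
`∑ n ^ (-Re s) < 1` bounds `∑ ‖f‖` and makes the whole family absolutely summable, which justifies
the regrouping.
-/

open Complex

section Tuples

variable {β R : Type*} [NormedCommRing R] {f : β → R}

theorem summable_norm_prod_fin_pi (hf : Summable (‖f ·‖)) :
    ∀ n : ℕ, Summable fun v : Fin n → β => ‖∏ i, f (v i)‖
  | 0 => (hasSum_fintype _).summable
  | n + 1 => by
    rw [← (Fin.consEquiv fun _ => β).summable_iff]
    simpa [Function.comp_def, Fin.consEquiv, Fin.prod_univ_succ]
      using hf.mul_norm (summable_norm_prod_fin_pi hf n)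

theorem hasSum_prod_fin_pi [CompleteSpace R] (hf : Summable (‖f ·‖)) :
    ∀ n : ℕ, HasSum (fun v : Fin n → β => ∏ i, f (v i)) ((∑' b, f b) ^ n)
  | 0 => by simp
  | n + 1 => by
    rw [← (Fin.consEquiv fun _ => β).hasSum_iff]
    have hprod := summable_mul_of_summable_norm hf (summable_norm_prod_fin_pi hf n)
    convert hprod.hasSum using 1
    · simp [Function.comp_def, Fin.consEquiv, Fin.prod_univ_succ]
    · rw [pow_succ', ← (hasSum_prod_fin_pi hf n).tsum_eq,
        tsum_mul_tsum_of_summable_norm hf (summable_norm_prod_fin_pi hf n)]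

end Tuples

theorem hasSum_list_prod_map_s16 {β K : Type*} [NormedField K] [CompleteSpace K] {f : β → K}
    (hf : Summable (‖f ·‖)) (hlt : ∑' b, ‖f b‖ < 1) :
    HasSum (fun L : List β => (L.map f).prod) (1 - ∑' b, f b)⁻¹ := by
  let F : (Σ n, Fin n → β) → K := fun p => ∏ i, f (p.2 i)
  have hF : Summable F := by
    refine .of_norm <| (summable_sigma_of_nonneg fun _ => norm_nonneg _).2
      ⟨summable_norm_prod_fin_pi hf, ?_⟩
    refine (summable_geometric_of_lt_one (tsum_nonneg fun _ => norm_nonneg _) hlt).congr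
      fun n => ?_
    simp only [F, norm_prod]
    exact ((hasSum_prod_fin_pi hf.norm n).tsum_eq).symm
  have hgeom := hasSum_geometric_of_norm_lt_one ((norm_tsum_le_tsum_norm hf).trans_lt hlt)
  have hFsum : HasSum F (1 - ∑' b, f b)⁻¹ :=
    hgeom.unique (hF.hasSum.sigma fun n => hasSum_prod_fin_pi hf n) ▸ hF.hasSum
  rw [← List.equivSigmaTuple.symm.hasSum_iff]
  convert hFsum using 1
  funext p
  simp [F, List.equivSigmaTuple, List.map_ofFn, List.prod_ofFn]

theorem hasSum_subtype_forall_mem_iff {α M : Type*} [AddCommMonoid M] [TopologicalSpace M]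
    (T : Set α) (g : List α → M) (a : M) :
    HasSum (fun c : {l : List α // ∀ i ∈ l, i ∈ T} => g c) a ↔
      HasSum (fun L : List T => g (L.map (↑))) a :=
  ((Equiv.ofInjective _ (List.map_injective_iff.2 Subtype.val_injective)).trans
    (Equiv.setCongr (Set.range_list_map_coe T))).hasSum_iff.symm

theorem Complex.norm_natCast_cpow_le (n : ℕ) (s : ℂ) : ‖(n : ℂ) ^ s‖ ≤ (n : ℝ) ^ s.re := by
  simpa [natCast_arg] using norm_cpow_le n s

theorem Complex.natCast_list_prod_cpow (l : List ℕ) (s : ℂ) :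
    ((l.prod : ℕ) : ℂ) ^ s = (l.map fun n : ℕ => (n : ℂ) ^ s).prod := by
  induction l with
  | nil => simp
  | cons n l ih =>
    rw [List.prod_cons, List.map_cons, List.prod_cons, Nat.cast_mul, natCast_mul_natCast_cpow, ih]

theorem composition_zeta_function_general
    (T : Set ℕ) (s : ℂ)
    (hsum : Summable (fun n : T => ((n : ℕ) : ℝ) ^ (-s.re)))
    (hlt : ∑' n : T, ((n : ℕ) : ℝ) ^ (-s.re) < 1) :
    Summable (fun c : {l : List ℕ // ∀ i ∈ l, i ∈ T} =>
        ((c.val.prod : ℕ) : ℂ) ^ (-s)) ∧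
    1 - ∑' n : T, ((n : ℕ) : ℂ) ^ (-s) ≠ 0 ∧
    ∑' c : {l : List ℕ // ∀ i ∈ l, i ∈ T}, ((c.val.prod : ℕ) : ℂ) ^ (-s)
      = (1 - ∑' n : T, ((n : ℕ) : ℂ) ^ (-s))⁻¹ := by
  set f : T → ℂ := fun n => ((n : ℕ) : ℂ) ^ (-s)
  have hf_le (n : T) : ‖f n‖ ≤ ((n : ℕ) : ℝ) ^ (-s.re) := norm_natCast_cpow_le n (-s)
  have hf : Summable (‖f ·‖) := hsum.of_nonneg_of_le (fun _ => norm_nonneg _) hf_le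
  have hf_lt : ∑' n, ‖f n‖ < 1 := (hf.tsum_le_tsum hf_le hsum).trans_lt hlt
  have hzeta : HasSum (fun c : {l : List ℕ // ∀ i ∈ l, i ∈ T} => ((c.val.prod : ℕ) : ℂ) ^ (-s))
      (1 - ∑' n, f n)⁻¹ := by
    rw [hasSum_subtype_forall_mem_iff T (fun l => ((l.prod : ℕ) : ℂ) ^ (-s))]
    have hterm : (fun L : List T => (((L.map (↑)).prod : ℕ) : ℂ) ^ (-s)) =
        fun L => (L.map f).prod := funext fun L => by
      rw [natCast_list_prod_cpow, List.map_map]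
      rfl
    exact hterm ▸ hasSum_list_prod_map_s16 hf hf_lt
  refine ⟨hzeta.summable, ?_, hzeta.tsum_eq⟩
  exact (isUnit_one_sub_of_norm_lt_one ((norm_tsum_le_tsum_norm hf).trans_lt hf_lt)).ne_zero

/-- **Composition zeta function with Euler-like formula.** For `T* ⊆ {n : 2 ≤ n}` and
`s ∈ ℂ` with `∑_{n∈T*} n^{-Re s} < 1`, the family `N(c)^{-s}` over compositions with
parts in `T*` is summable, `1 - ∑_{n∈T*} n^{-s} ≠ 0`, and the sum equals
`1/(1 - ∑_{n∈T*} n^{-s})`. -/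
theorem composition_zeta_function
    (T : Set ℕ) (hT : ∀ n ∈ T, 2 ≤ n) (s : ℂ)
    (hsum : Summable (fun n : T => ((n : ℕ) : ℝ) ^ (-s.re)))
    (hlt : ∑' n : T, ((n : ℕ) : ℝ) ^ (-s.re) < 1) :
    Summable (fun c : {l : List ℕ // ∀ i ∈ l, i ∈ T} =>
        ((c.val.prod : ℕ) : ℂ) ^ (-s)) ∧
    1 - ∑' n : T, ((n : ℕ) : ℂ) ^ (-s) ≠ 0 ∧
    ∑' c : {l : List ℕ // ∀ i ∈ l, i ∈ T}, ((c.val.prod : ℕ) : ℂ) ^ (-s)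
      = (1 - ∑' n : T, ((n : ℕ) : ℂ) ^ (-s))⁻¹ :=
  composition_zeta_function_general T s hsum hlt
end

section
/- For every positive integer n, the Möbius function satisfies μ(n) = ∑_{c∈C_{ℕ*}, N(c)=n} (−1)^{ℓ(c)}, where the (finite) sum is over all compositions c with every part ≥ 2 whose norm (product of parts) equals n; in particular, for n = 1 the empty composition contributes 1 = μ(1). -/
open Finset

def F : ℕ → Finset (List ℕ)
  | 0 => ∅
  | 1 => {[]}
  | (n+2) => (((n+2).divisors.erase 1).attach).biUnion
      (fun d => (F ((n+2)/d.1)).image (List.cons d.1))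
decreasing_by
  have hd : d.1 ∈ (n+2).divisors.erase 1 := d.2
  have h1 : d.1 ≠ 1 := (Finset.mem_erase.mp hd).1
  have h2 : d.1 ∣ n + 2 := (Nat.mem_divisors.mp (Finset.mem_erase.mp hd).2).1
  have hpos : 0 < d.1 := Nat.pos_of_dvd_of_pos h2 (by omega)
  exact Nat.div_lt_self (by omega) (by omega)

theorem mem_F (n : ℕ) (l : List ℕ) :
    l ∈ F n ↔ (∀ i ∈ l, 2 ≤ i) ∧ l.prod = n := by
  induction n using Nat.strong_induction_on generalizing l with
  | _ n ih =>
    match n with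
    | 0 =>
      simp only [F, Finset.notMem_empty, false_iff]
      rintro ⟨h2, hp⟩
      have : 0 < l.prod := List.prod_pos (fun i hi => by have := h2 i hi; omega)
      omega
    | 1 =>
      simp only [F, Finset.mem_singleton]
      constructor
      · rintro rfl; simp
      · rintro ⟨h2, hp⟩
        cases l with
        | nil => rfl
        | cons a t =>
          have := h2 a (by simp)
          have h1 : a * t.prod = 1 := by simpa using hp
          have := Nat.le_of_dvd one_pos ⟨t.prod, h1.symm⟩
          omega
    | (m+2) =>
      rw [F]
      simp only [Finset.mem_biUnion, Finset.mem_attach, true_and, Subtype.exists,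
        Finset.mem_image]
      constructor
      · rintro ⟨d, hd, t, ht, rfl⟩
        have h1 : d ≠ 1 := (Finset.mem_erase.mp hd).1
        have h2 : d ∣ m + 2 := (Nat.mem_divisors.mp (Finset.mem_erase.mp hd).2).1
        have hpos : 0 < d := Nat.pos_of_dvd_of_pos h2 (by omega)
        have hlt : (m+2)/d < m+2 := Nat.div_lt_self (by omega) (by omega)
        obtain ⟨ht2, htp⟩ := (ih _ hlt t).mp ht
        refine ⟨?_, ?_⟩
        · intro i hi
          rcases List.mem_cons.mp hi with rfl | hi
          · omega
          · exact ht2 i hi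
        · rw [List.prod_cons, htp, Nat.mul_div_cancel' h2]
      · rintro ⟨h2, hp⟩
        cases l with
        | nil => simp at hp
        | cons a t =>
          have ha : 2 ≤ a := h2 a (by simp)
          rw [List.prod_cons] at hp
          have hdvd : a ∣ m + 2 := ⟨t.prod, hp.symm⟩
          have hlt : (m+2)/a < m+2 := Nat.div_lt_self (by omega) (by omega)
          refine ⟨a, ?_, t, ?_, rfl⟩
          · exact Finset.mem_erase.mpr ⟨by omega, Nat.mem_divisors.mpr ⟨hdvd, by omega⟩⟩
          · refine (ih _ hlt t).mpr ⟨fun i hi => h2 i (List.mem_cons_of_mem _ hi), ?_⟩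
            rw [← hp, Nat.mul_div_cancel_left _ (by omega)]

theorem sum_F (n : ℕ) (hn : 0 < n) :
    ∑ l ∈ F n, (-1 : ℤ) ^ l.length = ArithmeticFunction.moebius n := by
  induction n using Nat.strong_induction_on with
  | _ n ih =>
    match n with
    | 1 => simp [F]
    | (m+2) =>
      rw [F, Finset.sum_biUnion]
      · have key : ∀ d ∈ ((m+2).divisors.erase 1).attach,
            ∑ l ∈ (F ((m+2)/d.1)).image (List.cons d.1), (-1 : ℤ) ^ l.length
              = -ArithmeticFunction.moebius ((m+2)/d.1) := by
          rintro ⟨d, hd⟩ _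
          have h1 : d ≠ 1 := (Finset.mem_erase.mp hd).1
          have h2 : d ∣ m + 2 := (Nat.mem_divisors.mp (Finset.mem_erase.mp hd).2).1
          have hpos : 0 < d := Nat.pos_of_dvd_of_pos h2 (by omega)
          have hlt : (m+2)/d < m+2 := Nat.div_lt_self (by omega) (by omega)
          have hqpos : 0 < (m+2)/d := Nat.div_pos (Nat.le_of_dvd (by omega) h2) hpos
          rw [Finset.sum_image (fun x _ y _ h => by simpa using h)]
          simp only [List.length_cons, pow_succ]
          rw [← Finset.sum_mul, ih _ hlt hqpos]
          ring
        rw [Finset.sum_congr rfl key]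
        rw [Finset.sum_attach ((m+2).divisors.erase 1)
          (fun d => -ArithmeticFunction.moebius ((m+2)/d))]
        have hz : ∑ d ∈ (m+2).divisors, ArithmeticFunction.moebius ((m+2)/d) = 0 := by
          rw [Nat.sum_div_divisors]
          have := ArithmeticFunction.coe_zeta_mul_moebius
          have happ := congrArg (fun f => f (m+2)) this
          simp only [ArithmeticFunction.coe_zeta_mul_apply, ArithmeticFunction.one_apply] at happ
          simpa using happ
        have h1mem : 1 ∈ (m+2).divisors := Nat.one_mem_divisors.mpr (by omega)
        have h3 := Finset.sum_erase_add (m+2).divisors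
          (fun d => ArithmeticFunction.moebius ((m+2)/d)) h1mem
        simp only [Nat.div_one] at h3
        have herase : ∑ d ∈ (m+2).divisors.erase 1, ArithmeticFunction.moebius ((m+2)/d)
            = -ArithmeticFunction.moebius (m+2) := by linarith
        rw [Finset.sum_neg_distrib, herase, neg_neg]
      · -- pairwise disjoint
        rintro ⟨d, hd⟩ _ ⟨e, he⟩ _ hne
        simp only [Finset.disjoint_left, Finset.mem_image]
        rintro l ⟨t, _, rfl⟩ ⟨s, _, h⟩
        apply hne
        simp only [List.cons.injEq] at h
        exact Subtype.ext h.1.symm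

/-- **Möbius function as a composition sum.** For every positive integer `n`, the Möbius
function satisfies `μ(n) = ∑ (-1)^{ℓ(c)}`, the (finite) sum being over all compositions
`c` with every part `≥ 2` whose norm (product of parts) equals `n`. -/
theorem moebius_eq_composition_sum (n : ℕ) (hn : 0 < n) :
    ArithmeticFunction.moebius n
      = ∑' c : {l : List ℕ // (∀ i ∈ l, 2 ≤ i) ∧ l.prod = n},
          (-1 : ℤ) ^ c.val.length := by
  have hset : {l : List ℕ | (∀ i ∈ l, 2 ≤ i) ∧ l.prod = n} = ↑(F n) := by
    ext l; simp [mem_F]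
  calc ArithmeticFunction.moebius n
      = ∑ l ∈ F n, (-1 : ℤ) ^ l.length := (sum_F n hn).symm
    _ = ∑' l : (F n : Set (List ℕ)), (-1 : ℤ) ^ (l : List ℕ).length :=
        (Finset.tsum_subtype (F n) (fun l => (-1 : ℤ) ^ l.length)).symm
    _ = _ :=
        (Equiv.subtypeEquivRight (fun l => (mem_F n l))).tsum_eq
          (fun c : {l : List ℕ // (∀ i ∈ l, 2 ≤ i) ∧ l.prod = n} => (-1 : ℤ) ^ c.val.length)
end
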